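/- arXiv:1202.2267 — 5 statements merged into one kernel-verified Lean document; each statement's English description precedes it below -/
import Mathlib

section
/- If p is an odd prime and x, y, z are natural numbers with y ≥ 1 satisfying 16^x + p^y = z², then either (p, x, y, z) = (3, 1, 2, 5), or y = 1 and p = 1 + 2^(2x+1) with z = 2^(2x) + 1. -/
theorem key (p y n : ℕ) (hp : p.Prime) (hodd : Odd p) (hy : 2 ≤ y)
    (h : p ^ y = 2 ^ n + 1) : p = 3 ∧ y = 2 ∧ n = 3 := by
  have hp3 : 3 ≤ p := by
    rcases hodd with ⟨k, hk⟩
    have := hp.two_le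
    omega
  rcases Nat.even_or_odd y with ⟨m, hm⟩ | hyo
  · -- even case : y = m + m
    have hm1 : 1 ≤ m := by omega
    have hq3 : 3 ≤ p ^ m := by
      calc 3 ≤ p := hp3
      _ = p ^ 1 := (pow_one p).symm
      _ ≤ p ^ m := Nat.pow_le_pow_right (by omega) hm1
    have hqq : p ^ m * p ^ m = 2 ^ n + 1 := by
      rw [← pow_add, ← hm, h]
    obtain ⟨r, hr⟩ := Nat.exists_eq_add_of_le (by omega : 1 ≤ p ^ m)
    have hfac : (p ^ m - 1) * (p ^ m + 1) = 2 ^ n := by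
      have h1 : (1 + r) * (1 + r) = r * (r + 2) + 1 := by ring
      rw [hr] at hqq ⊢
      simp only [Nat.add_sub_cancel_left]
      have h2 : r * (1 + r + 1) = r * (r + 2) := by ring
      omega
    have hd1 : (p ^ m - 1) ∣ 2 ^ n := ⟨p ^ m + 1, hfac.symm⟩
    have hd2 : (p ^ m + 1) ∣ 2 ^ n := ⟨p ^ m - 1, by rw [← hfac]; ring⟩
    obtain ⟨s, hs, hqs⟩ := (Nat.dvd_prime_pow Nat.prime_two).mp hd1
    obtain ⟨t, ht, hqt⟩ := (Nat.dvd_prime_pow Nat.prime_two).mp hd2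
    have hst : 2 ^ t = 2 ^ s + 2 := by omega
    have hs1 : s = 1 := by
      by_contra hs1
      have hsge : 2 ≤ s := by
        rcases Nat.lt_or_ge s 2 with h' | h'
        · interval_cases s <;> omega
        · exact h'
      have htge : 2 ≤ t := by
        have h4 : 4 ≤ 2 ^ s := by
          calc (4:ℕ) = 2 ^ 2 := rfl
          _ ≤ 2 ^ s := Nat.pow_le_pow_right (by omega) hsge
        rcases Nat.lt_or_ge t 2 with h' | h'
        · interval_cases t <;> omega
        · exact h'
      have h4s : (4:ℕ) ∣ 2 ^ s := by
        calc (4:ℕ) = 2 ^ 2 := rfl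
        _ ∣ 2 ^ s := pow_dvd_pow 2 hsge
      have h4t : (4:ℕ) ∣ 2 ^ t := by
        calc (4:ℕ) = 2 ^ 2 := rfl
        _ ∣ 2 ^ t := pow_dvd_pow 2 htge
      omega
    have hpm : p ^ m = 3 := by subst hs1; omega
    have hp3' : p = 3 := by
      have hd : p ∣ 3 := hpm ▸ dvd_pow_self p (by omega)
      exact (Nat.prime_dvd_prime_iff_eq hp (by norm_num)).mp hd
    have hm1' : m = 1 := by
      subst hp3'
      have : 3 ^ m = 3 ^ 1 := by simpa using hpm
      exact Nat.pow_right_injective (by norm_num) this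
    have hn3 : n = 3 := by
      rw [hpm] at hfac
      have : (2:ℕ) ^ n = 2 ^ 3 := by omega
      exact Nat.pow_right_injective (by norm_num) this
    exact ⟨hp3', by omega, hn3⟩
  · -- odd case: contradiction
    exfalso
    have hgeo : (∑ i ∈ Finset.range y, p ^ i) * (p - 1) = 2 ^ n := by
      have hz : (∑ i ∈ Finset.range y, (p:ℤ) ^ i) * ((p:ℤ) - 1) = (p:ℤ) ^ y - 1 :=
        geom_sum_mul _ _
      have hcast : ((∑ i ∈ Finset.range y, p ^ i : ℕ):ℤ) * ((p:ℤ) - 1) = (2:ℤ) ^ n := by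
        push_cast
        rw [hz]
        have hpy : (p:ℤ) ^ y = 2 ^ n + 1 := by exact_mod_cast congrArg (Nat.cast : ℕ → ℤ) h
        omega
      have : (((∑ i ∈ Finset.range y, p ^ i) * (p - 1) : ℕ) : ℤ) = ((2 ^ n : ℕ) : ℤ) := by
        push_cast [Nat.cast_sub (by omega : 1 ≤ p)]
        rw [← hcast]; push_cast; ring
      exact_mod_cast this
    have hSdvd : (∑ i ∈ Finset.range y, p ^ i) ∣ 2 ^ n := ⟨p - 1, hgeo.symm⟩
    have hSodd : (∑ i ∈ Finset.range y, p ^ i) % 2 = 1 := by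
      have h1 : (∑ i ∈ Finset.range y, p ^ i) % 2
          = (∑ i ∈ Finset.range y, p ^ i % 2) % 2 := Finset.sum_nat_mod _ _ _
      have h2 : ∀ i ∈ Finset.range y, p ^ i % 2 = 1 := by
        intro i _
        rw [Nat.pow_mod, Nat.odd_iff.mp hodd, one_pow]
        rfl
      rw [Finset.sum_congr rfl h2] at h1
      simp only [Finset.sum_const, Finset.card_range, smul_eq_mul, mul_one] at h1
      rw [h1, Nat.odd_iff.mp hyo]
    have hS1 : (∑ i ∈ Finset.range y, p ^ i) = 1 := by
      have hnd : ¬ (2 ∣ (∑ i ∈ Finset.range y, p ^ i)) := by omega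
      have hcop : Nat.Coprime (∑ i ∈ Finset.range y, p ^ i) 2 :=
        Nat.coprime_comm.mp ((Nat.prime_two.coprime_iff_not_dvd).mpr hnd)
      exact Nat.Coprime.eq_one_of_dvd (hcop.pow_right n) hSdvd
    rw [hS1, one_mul] at hgeo
    have hpy1 : p ^ y = p ^ 1 := by
      rw [pow_one]
      have := hp.two_le
      omega
    have := Nat.pow_right_injective hp.two_le hpy1
    omega

theorem stmt6 (p x y z : ℕ) (hp : p.Prime) (hodd : Odd p) (hy : 1 ≤ y)
    (h : 16 ^ x + p ^ y = z ^ 2) :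
    (p = 3 ∧ x = 1 ∧ y = 2 ∧ z = 5) ∨
    (y = 1 ∧ p = 1 + 2 ^ (2 * x + 1) ∧ z = 2 ^ (2 * x) + 1) := by
  have hp3 : 3 ≤ p := by
    rcases hodd with ⟨k, hk⟩
    have := hp.two_le
    omega
  have h16 : (16:ℕ) ^ x = (2 ^ (2 * x)) ^ 2 := by
    rw [show (16:ℕ) = 2 ^ 4 by norm_num, ← pow_mul, ← pow_mul]
    ring_nf
  rw [h16] at h
  have hpy1 : 1 ≤ p ^ y := Nat.one_le_pow _ _ (by omega)
  have hza : 2 ^ (2 * x) < z := by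
    by_contra hle
    push_neg at hle
    have : z ^ 2 ≤ (2 ^ (2 * x)) ^ 2 := Nat.pow_le_pow_left hle 2
    omega
  obtain ⟨d, hd⟩ := Nat.exists_eq_add_of_lt hza
  have hkey : p ^ y = (d + 1) * (d + 1 + 2 * 2 ^ (2 * x)) := by
    have hexp : (2 ^ (2 * x) + d + 1) ^ 2
        = (2 ^ (2 * x)) ^ 2 + (d + 1) * (d + 1 + 2 * 2 ^ (2 * x)) := by ring
    rw [hd] at h
    omega
  have hd1 : (d + 1) ∣ p ^ y := ⟨_, hkey⟩
  have hd2 : (d + 1 + 2 * 2 ^ (2 * x)) ∣ p ^ y := ⟨d + 1, by rw [hkey]; ring⟩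
  obtain ⟨i, hi, hdi⟩ := (Nat.dvd_prime_pow hp).mp hd1
  obtain ⟨j, hj, hdj⟩ := (Nat.dvd_prime_pow hp).mp hd2
  have hij : i ≤ j := by
    have hle : p ^ i ≤ p ^ j := by omega
    exact (Nat.pow_le_pow_iff_right (by omega : 1 < p)).mp hle
  have hdvdsub : p ^ i ∣ 2 * 2 ^ (2 * x) := by
    have h1 : 2 * 2 ^ (2 * x) = p ^ j - p ^ i := by omega
    rw [h1]
    exact Nat.dvd_sub (pow_dvd_pow p hij) dvd_rfl
  have hi0 : i = 0 := by
    by_contra hi0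
    have hpd : p ∣ 2 * 2 ^ (2 * x) := dvd_trans (dvd_pow_self p hi0) hdvdsub
    rw [show 2 * 2 ^ (2 * x) = 2 ^ (2 * x + 1) by rw [pow_succ]; ring] at hpd
    have := Nat.le_of_dvd (by norm_num) (hp.dvd_of_dvd_pow hpd)
    omega
  have hd0 : d = 0 := by
    rw [hi0, pow_zero] at hdi
    omega
  have hjy : j = y := by
    have hmul : p ^ i * p ^ j = p ^ y := by rw [← hdi, ← hdj, hkey]
    rw [← pow_add] at hmul
    have := Nat.pow_right_injective hp.two_le hmul
    omega
  have h2e : (2:ℕ) ^ (2 * x + 1) = 2 * 2 ^ (2 * x) := by rw [pow_succ]; ring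
  have hpy : p ^ y = 2 ^ (2 * x + 1) + 1 := by
    rw [← hjy, ← hdj]
    omega
  rcases Nat.lt_or_ge y 2 with hy2 | hy2
  · right
    have hy1 : y = 1 := by omega
    subst hy1
    rw [pow_one] at hpy
    exact ⟨rfl, by omega, by omega⟩
  · left
    obtain ⟨hp3', hy2', hn3⟩ := key p y (2 * x + 1) hp hodd hy2 hpy
    have hx1 : x = 1 := by omega
    refine ⟨hp3', hx1, hy2', ?_⟩
    subst hx1
    norm_num at hd
    omega
end

section
/- If p is an odd prime and x, y, z are natural numbers with y ≥ 1 satisfying 64^x + p^y = z², then y = 1, p = 1 + 2^(3x+1), and z = 2^(3x) + 1. -/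
/-!
Write `64 ^ x = a ^ 2` with `a = 2 ^ (3x)`. Then `(z - a)(z + a) = p ^ y`, so both factors are
powers of `p`; if `z - a` were divisible by `p`, so would be their difference `2a`, impossible for
odd `p`. Hence `z = a + 1` and `p ^ y = 2 ^ (3x+1) + 1`. Finally `p ^ y = 2 ^ n + 1` forces `y = 1`
unless `n = 3`: for even `y` the factors `p ^ (y/2) ∓ 1` are powers of two differing by `2`, and
for odd `y` the cofactor `1 + p + ⋯ + p ^ (y-1)` of `p - 1` in `2 ^ n` is a sum of `y` odd
terms, hence an odd power of two, hence `1`.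
-/

namespace Nat

theorem eq_one_of_two_pow_add_two_eq_two_pow {u v : ℕ} (h : 2 ^ u + 2 = 2 ^ v) : u = 1 := by
  have := Nat.two_pow_pos u
  rcases u with _ | _ | u <;> rcases v with _ | _ | v <;>
    simp only [pow_succ, pow_zero] at * <;> omega

theorem eq_three_of_sq_eq_two_pow_add_one {q n : ℕ} (h : q ^ 2 = 2 ^ n + 1) : n = 3 := by
  obtain ⟨r, rfl⟩ : ∃ r, q = r + 1 := ⟨q - 1, by grind⟩
  have hfac : r * (r + 2) = 2 ^ n := by linear_combination h
  obtain ⟨u, -, hu⟩ := (dvd_prime_pow prime_two).1 (Dvd.intro _ hfac)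
  obtain ⟨v, -, hv⟩ := (dvd_prime_pow prime_two).1 (Dvd.intro_left _ hfac)
  have hr : r = 2 := by
    rw [hu, eq_one_of_two_pow_add_two_eq_two_pow (show 2 ^ u + 2 = 2 ^ v by rw [← hu, ← hv]),
      pow_one]
  subst hr
  exact Nat.pow_right_injective le_rfl (hfac.symm.trans (by norm_num) : 2 ^ n = 2 ^ 3)

theorem eq_one_of_pow_eq_two_pow_add_one_of_odd {p y n : ℕ} (hp : Odd p) (hy : Odd y)
    (h : p ^ y = 2 ^ n + 1) : y = 1 := by
  obtain ⟨k, rfl⟩ := hp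
  have hgeom : (∑ i ∈ Finset.range y, (2 * k + 1) ^ i) * (2 * k) = 2 ^ n := by
    have := geom_sum_mul_add (2 * k) y
    omega
  set S := ∑ i ∈ Finset.range y, (2 * k + 1) ^ i with hS
  have hS_odd : Odd S := by
    have hterms : ∀ i ∈ Finset.range y, Odd ((2 * k + 1) ^ i) :=
      fun i _ => (odd_two_mul_add_one k).pow
    rwa [hS, Finset.odd_sum_iff_odd_card_odd, Finset.filter_true_of_mem hterms,
      Finset.card_range]
  obtain ⟨j, -, hj⟩ := (dvd_prime_pow prime_two).1 (Dvd.intro _ hgeom)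
  have hS_one : S = 1 := by
    rcases j with _ | j
    · exact hj
    · exact absurd (hj ▸ hS_odd) (not_odd_iff_even.2 (even_pow.2 ⟨even_two, j.succ_ne_zero⟩))
  have hy_le : y ≤ S := by
    simpa using Finset.card_nsmul_le_sum (Finset.range y) _ 1 fun i _ => one_le_pow i _ (by omega)
  obtain ⟨m, rfl⟩ := hy
  omega

theorem eq_one_of_pow_eq_two_pow_add_one {p y n : ℕ} (hp : Odd p) (hn : n ≠ 3)
    (h : p ^ y = 2 ^ n + 1) : y = 1 := by
  rcases even_or_odd y with ⟨m, rfl⟩ | hy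
  · exact absurd (eq_three_of_sq_eq_two_pow_add_one (by rw [← h, ← pow_mul, mul_two])) hn
  · exact eq_one_of_pow_eq_two_pow_add_one_of_odd hp hy h

theorem eq_add_one_of_sq_add_prime_pow_eq_sq {p a y z : ℕ} (hp : p.Prime) (hpa : ¬ p ∣ 2 * a)
    (h : a ^ 2 + p ^ y = z ^ 2) : z = a + 1 := by
  have ha : a ≠ 0 := by rintro rfl; exact hpa (dvd_zero p)
  have haz : a < z := by
    have : a ^ 2 < z ^ 2 := by have := pow_pos hp.pos y; omega
    exact lt_of_pow_lt_pow_left₀ 2 (zero_le z) this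
  have hfac : (z + a) * (z - a) = p ^ y := by rw [← sq_sub_sq]; omega
  obtain ⟨i, -, hi⟩ := (dvd_prime_pow hp).1 (Dvd.intro_left _ hfac)
  obtain ⟨j, -, hj⟩ := (dvd_prime_pow hp).1 (Dvd.intro _ hfac)
  rcases i with _ | i
  · rw [pow_zero] at hi
    omega
  · have hj0 : j ≠ 0 := by
      rintro rfl
      rw [pow_zero] at hj
      omega
    have hdiff : z + a - (z - a) = 2 * a := by omega
    have hp_dvd_z_add : p ∣ z + a := hj ▸ dvd_pow_self p hj0
    have hp_dvd_z_sub : p ∣ z - a := hi ▸ dvd_pow_self p i.succ_ne_zero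
    exact absurd (hdiff ▸ Nat.dvd_sub hp_dvd_z_add hp_dvd_z_sub) hpa

end Nat

theorem stmt8_general (p x y z : ℕ) (hp : p.Prime) (hodd : Odd p)
    (h : 64 ^ x + p ^ y = z ^ 2) :
    y = 1 ∧ p = 1 + 2 ^ (3 * x + 1) ∧ z = 2 ^ (3 * x) + 1 := by
  set a := 2 ^ (3 * x) with ha
  have h64 : 64 ^ x = a ^ 2 := by
    rw [ha, ← pow_mul, show (64 : ℕ) = 2 ^ 6 by norm_num, ← pow_mul]
    ring_nf
  have h2a : 2 * a = 2 ^ (3 * x + 1) := by rw [pow_succ, mul_comm]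
  have hpa : ¬ p ∣ 2 * a := fun hdvd =>
    hp.one_lt.ne' (((Nat.coprime_two_right.2 hodd).pow_right _).eq_one_of_dvd (h2a ▸ hdvd))
  have hz := Nat.eq_add_one_of_sq_add_prime_pow_eq_sq hp hpa (h64 ▸ h)
  have hpy : p ^ y = 2 ^ (3 * x + 1) + 1 := by
    rw [h64, hz] at h
    linarith
  have hy := Nat.eq_one_of_pow_eq_two_pow_add_one hodd (by omega) hpy
  refine ⟨hy, ?_, hz⟩
  rw [hy, pow_one] at hpy
  omega

theorem stmt8 (p x y z : ℕ) (hp : p.Prime) (hodd : Odd p) (hy : 1 ≤ y)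
    (h : 64 ^ x + p ^ y = z ^ 2) :
    y = 1 ∧ p = 1 + 2 ^ (3 * x + 1) ∧ z = 2 ^ (3 * x) + 1 :=
  stmt8_general p x y z hp hodd h
end

section
/- Let p be an odd prime, n a positive integer, and x, y, z natural numbers with y ≥ 1 satisfying (4^n)^x + p^y = z². Then either p = 3, y = 2, n·x = 2, z = 5, or y = 1, p = 1 + 2^(n·x+1), and z = 2^(n·x) + 1. -/
-- Auxiliary: Catalan-type lemma: p odd prime, y ≥ 2, p^y = 2^k + 1 forces p=3, y=2, k=3.
lemma stmt10_aux (p y k : ℕ) (hp : p.Prime) (hodd : Odd p) (hy : 2 ≤ y)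
    (h : p ^ y = 2 ^ k + 1) : p = 3 ∧ y = 2 ∧ k = 3 := by
  have hp3 : 3 ≤ p := by
    have h2 := hp.two_le
    rcases Nat.odd_iff.mp hodd with hm
    omega
  rcases Nat.even_or_odd y with hev | hod
  · -- y even: y = 2t
    obtain ⟨t, ht⟩ := hev
    have ht1 : 1 ≤ t := by omega
    set q := p ^ t with hq
    have hqodd : Odd q := hodd.pow
    have hq3 : 3 ≤ q := by
      calc 3 ≤ p := hp3
      _ = p ^ 1 := (pow_one p).symm
      _ ≤ p ^ t := Nat.pow_le_pow_right (by omega) ht1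
    have hqq : q * q = 2 ^ k + 1 := by
      rw [hq, ← pow_add, ← ht, h]
    have hfac : (q - 1) * (q + 1) = 2 ^ k := by
      obtain ⟨r, hr⟩ : ∃ r, q = r + 1 := ⟨q - 1, by omega⟩
      have hq2 : q * q = r * (r + 2) + 1 := by rw [hr]; ring
      have he : (q - 1) * (q + 1) = r * (r + 2) := by
        rw [hr, Nat.add_sub_cancel]
      omega
    have hd1 : (q - 1) ∣ 2 ^ k := ⟨q + 1, hfac.symm⟩
    have hd2 : (q + 1) ∣ 2 ^ k := ⟨q - 1, by rw [← hfac]; ring⟩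
    obtain ⟨c, hc, hc2⟩ := (Nat.dvd_prime_pow Nat.prime_two).mp hd1
    obtain ⟨d, hd, hd2'⟩ := (Nat.dvd_prime_pow Nat.prime_two).mp hd2
    -- 2^d = 2^c + 2
    have hcd : 2 ^ d = 2 ^ c + 2 := by omega
    have hc1 : 1 ≤ c := by
      rcases Nat.eq_zero_or_pos c with h0 | h1
      · exfalso
        rw [h0] at hc2
        simp at hc2
        omega
      · exact h1
    have hcle : c < d := by
      by_contra hcon
      push_neg at hcon
      have : 2 ^ d ≤ 2 ^ c := Nat.pow_le_pow_right (by omega) hcon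
      omega
    have hceq : c = 1 := by
      by_contra hcon
      have hc2' : 2 ≤ c := by omega
      have h4c : (4 : ℕ) ∣ 2 ^ c := by
        calc (4:ℕ) = 2 ^ 2 := by norm_num
        _ ∣ 2 ^ c := Nat.pow_dvd_pow 2 hc2'
      have h4d : (4 : ℕ) ∣ 2 ^ d := by
        calc (4:ℕ) = 2 ^ 2 := by norm_num
        _ ∣ 2 ^ d := Nat.pow_dvd_pow 2 (by omega)
      omega
    have hq3' : q = 3 := by
      rw [hceq] at hc2
      omega
    have hp3' : p = 3 ∧ t = 1 := by
      have : p ^ t = 3 := hq3'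
      rcases Nat.eq_zero_or_pos t with h0 | h1
      · rw [h0] at this; simp at this
      · constructor
        · have hpd : p ∣ 3 := by
            rw [← this]
            exact dvd_pow_self p (by omega)
          have := (Nat.prime_dvd_prime_iff_eq hp (by norm_num)).mp hpd
          exact this
        · by_contra hcon
          have ht2 : 2 ≤ t := by omega
          have : 3 ^ 2 ≤ p ^ t := by
            calc (3:ℕ) ^ 2 ≤ p ^ 2 := Nat.pow_le_pow_left hp3 2
            _ ≤ p ^ t := Nat.pow_le_pow_right (by omega) ht2
          omega
    have hk3 : k = 3 := by
      have h8 : 2 ^ k = 8 := by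
        rw [hq3'] at hqq; omega
      have : (2:ℕ) ^ k = 2 ^ 3 := by norm_num [h8]
      exact Nat.pow_right_injective (by norm_num) this
    exact ⟨hp3'.1, by omega, hk3⟩
  · -- y odd ≥ 3: contradiction
    exfalso
    have hy3 : 3 ≤ y := by
      rcases Nat.odd_iff.mp hod with hm; omega
    set S := ∑ i ∈ Finset.range y, p ^ i with hS
    have hgeom : (S : ℤ) * ((p : ℤ) - 1) = (p : ℤ) ^ y - 1 := by
      rw [hS]
      push_cast
      exact geom_sum_mul (p : ℤ) y
    have hSdvd : (S : ℤ) ∣ (2 : ℤ) ^ k := by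
      refine ⟨(p : ℤ) - 1, ?_⟩
      rw [hgeom]
      have : ((p : ℤ)) ^ y = 2 ^ k + 1 := by exact_mod_cast h
      omega
    have hSdvdN : S ∣ 2 ^ k := by
      have := Int.natCast_dvd_natCast.mp (by exact_mod_cast hSdvd)
      exact this
    obtain ⟨c, hc, hc2⟩ := (Nat.dvd_prime_pow Nat.prime_two).mp hSdvdN
    have hSodd : S % 2 = 1 := by
      have hterm : ∀ i ∈ Finset.range y, p ^ i % 2 = 1 % 2 := by
        intro i _
        exact Nat.odd_iff.mp (hodd.pow)
      calc S % 2 = (∑ i ∈ Finset.range y, p ^ i % 2) % 2 := Finset.sum_nat_mod _ _ _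
      _ = (∑ _i ∈ Finset.range y, 1 % 2) % 2 := by rw [Finset.sum_congr rfl hterm]
      _ = y % 2 := by simp [Finset.sum_const]
      _ = 1 := Nat.odd_iff.mp hod
    have hc0 : c = 0 := by
      by_contra hcon
      have : 2 ∣ 2 ^ c := dvd_pow_self 2 hcon
      omega
    have hS1 : S = 1 := by rw [hc2, hc0, pow_zero]
    have hSge : 1 + p ≤ S := by
      have hsub : ({0, 1} : Finset ℕ) ⊆ Finset.range y := by
        intro i hi
        simp only [Finset.mem_insert, Finset.mem_singleton] at hi
        simp only [Finset.mem_range]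
        omega
      calc 1 + p = ∑ i ∈ ({0, 1} : Finset ℕ), p ^ i := by simp
      _ ≤ S := Finset.sum_le_sum_of_subset hsub
    omega

theorem stmt10 (p n x y z : ℕ) (hp : p.Prime) (hodd : Odd p) (hn : 1 ≤ n)
    (hy : 1 ≤ y) (h : (4 ^ n) ^ x + p ^ y = z ^ 2) :
    (p = 3 ∧ y = 2 ∧ n * x = 2 ∧ z = 5) ∨
    (y = 1 ∧ p = 1 + 2 ^ (n * x + 1) ∧ z = 2 ^ (n * x) + 1) := by
  have hp3 : 3 ≤ p := by
    have h2 := hp.two_le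
    rcases Nat.odd_iff.mp hodd with hm
    omega
  set m := n * x with hm
  set A := 2 ^ m with hA
  have h4 : (4 ^ n) ^ x = A ^ 2 := by
    rw [hA, hm]
    rw [show (4:ℕ) = 2 ^ 2 from rfl, ← pow_mul, ← pow_mul, ← pow_mul]
    congr 1
    ring
  rw [h4] at h
  -- z > A
  have hpy : 3 ≤ p ^ y := by
    calc 3 ≤ p := hp3
    _ = p ^ 1 := (pow_one p).symm
    _ ≤ p ^ y := Nat.pow_le_pow_right (by omega) hy
  have hzA : A < z := by
    by_contra hcon
    push_neg at hcon
    have : z ^ 2 ≤ A ^ 2 := Nat.pow_le_pow_left hcon 2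
    omega
  have hfac : p ^ y = (z - A) * (z + A) := by
    obtain ⟨r, hr⟩ : ∃ r, z = A + r := ⟨z - A, by omega⟩
    have e1 : (A + r) ^ 2 = A ^ 2 + r * (2 * A + r) := by ring
    have e2 : (z - A) * (z + A) = r * (2 * A + r) := by
      rw [hr, Nat.add_sub_cancel_left]; ring
    have h' := h
    rw [hr] at h'
    omega
  have hd1 : (z - A) ∣ p ^ y := ⟨z + A, hfac⟩
  have hd2 : (z + A) ∣ p ^ y := ⟨z - A, by rw [hfac]; ring⟩
  obtain ⟨a, ha, ha2⟩ := (Nat.dvd_prime_pow hp).mp hd1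
  obtain ⟨b, hb, hb2⟩ := (Nat.dvd_prime_pow hp).mp hd2
  have hA1 : 1 ≤ A := Nat.one_le_two_pow
  have hb1 : 1 ≤ b := by
    by_contra hcon
    push_neg at hcon
    interval_cases b
    simp at hb2
    omega
  have ha0 : a = 0 := by
    by_contra hcon
    have hpa : p ∣ p ^ a := dvd_pow_self p hcon
    have hpb : p ∣ p ^ b := dvd_pow_self p (by omega)
    have hp2A : p ∣ 2 * A := by
      have : p ∣ (z + A) - (z - A) := Nat.dvd_sub (hb2 ▸ hpb) (ha2 ▸ hpa)
      have heq : (z + A) - (z - A) = 2 * A := by omega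
      rwa [heq] at this
    have hpdvd2 : p ∣ 2 ^ (m + 1) := by
      have : 2 * A = 2 ^ (m + 1) := by rw [hA, pow_succ]; ring
      rwa [this] at hp2A
    have := hp.dvd_of_dvd_pow hpdvd2
    have := Nat.le_of_dvd (by norm_num) this
    omega
  rw [ha0, pow_zero] at ha2
  have hz : z = A + 1 := by omega
  have hpyeq : p ^ y = 2 ^ (m + 1) + 1 := by
    have h1 : p ^ y = z + A := by rw [hfac, ha2, one_mul]
    have h2 : z + A = 2 ^ (m + 1) + 1 := by rw [hz, hA, pow_succ]; ring
    omega
  rcases Nat.lt_or_ge y 2 with hy1 | hy2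
  · -- y = 1
    right
    have hy1' : y = 1 := by omega
    refine ⟨hy1', ?_, ?_⟩
    · rw [hy1', pow_one] at hpyeq
      omega
    · rw [hz, hA]
  · -- y ≥ 2
    left
    obtain ⟨hp3', hy2', hk3⟩ := stmt10_aux p y (m + 1) hp hodd hy2 hpyeq
    have hm2 : m = 2 := by omega
    refine ⟨hp3', hy2', hm2, ?_⟩
    rw [hz, hA, hm2]
    norm_num
end

section
/- If p is an odd prime and x, y, z are natural numbers with y ≥ 1 such that z² − 2^(2x) = p^y, then there exists a natural number v with 2v < y, z − 2^x = p^v and z + 2^x = p^(y−v). -/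
theorem Nat.Prime.exists_pow_of_mul_eq_pow_of_lt {p a b n : ℕ} (hp : p.Prime) (hab : a < b)
    (h : a * b = p ^ n) : ∃ v : ℕ, 2 * v < n ∧ a = p ^ v ∧ b = p ^ (n - v) := by
  obtain ⟨i, -, rfl⟩ := (Nat.dvd_prime_pow hp).mp (Dvd.intro b h)
  obtain ⟨j, -, rfl⟩ := (Nat.dvd_prime_pow hp).mp (Dvd.intro_left _ h)
  have hij : i < j := (pow_lt_pow_iff_right₀ hp.one_lt).mp hab
  have hn : i + j = n :=
    Nat.pow_right_injective hp.two_le (show p ^ (i + j) = p ^ n by rw [pow_add, h])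
  exact ⟨i, by omega, rfl, by rw [show n - i = j by omega]⟩

theorem stmt14_general (p x y z : ℕ) (hp : p.Prime)
    (h : z ^ 2 - 2 ^ (2 * x) = p ^ y) :
    ∃ v : ℕ, 2 * v < y ∧ z - 2 ^ x = p ^ v ∧ z + 2 ^ x = p ^ (y - v) := by
  have hlt : z - 2 ^ x < z + 2 ^ x := by
    have := Nat.two_pow_pos x
    omega
  have hfac : (z - 2 ^ x) * (z + 2 ^ x) = p ^ y := by
    rw [mul_comm, ← Nat.sq_sub_sq, ← pow_mul, mul_comm x, h]
  exact hp.exists_pow_of_mul_eq_pow_of_lt hlt hfac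

theorem stmt14 (p x y z : ℕ) (hp : p.Prime) (hodd : Odd p) (hy : 1 ≤ y)
    (hz : 2 ^ (2 * x) ≤ z ^ 2) (h : z ^ 2 - 2 ^ (2 * x) = p ^ y) :
    ∃ v : ℕ, 2 * v < y ∧ z - 2 ^ x = p ^ v ∧ z + 2 ^ x = p ^ (y - v) :=
  stmt14_general p x y z hp h
end

section
/- If p is an odd prime and x, y, z are natural numbers with y ≥ 2 satisfying 4^x + p^y = z², then (p, x, y, z) = (3, 2, 2, 5). -/
theorem stmt18 (p x y z : ℕ) (hp : p.Prime) (hodd : Odd p) (hy : 2 ≤ y)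
    (h : 4 ^ x + p ^ y = z ^ 2) : p = 3 ∧ x = 2 ∧ y = 2 ∧ z = 5 := by
  have hp2 : p ≠ 2 := by rintro rfl; simp [Nat.odd_iff] at hodd
  have hp3 : 3 ≤ p := by have := hp.two_le; omega
  have hX1 : (1:ℕ) ≤ 2 ^ x := Nat.one_le_two_pow
  have hpy9 : 9 ≤ p ^ y := by
    calc (9:ℕ) = 3 ^ 2 := by norm_num
    _ ≤ p ^ 2 := Nat.pow_le_pow_left hp3 2
    _ ≤ p ^ y := Nat.pow_le_pow_right (by omega) hy
  have h4 : (4:ℕ) ^ x = 2 ^ x * 2 ^ x := by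
    rw [show (4:ℕ) = 2 * 2 by norm_num, mul_pow]
  have hz : 2 ^ x < z := by
    have h1 : (2 ^ x) ^ 2 < z ^ 2 := by nlinarith
    exact lt_of_pow_lt_pow_left₀ 2 (Nat.zero_le z) h1
  obtain ⟨d, rfl⟩ : ∃ d, z = 2 ^ x + d := ⟨z - 2 ^ x, (Nat.add_sub_cancel' hz.le).symm⟩
  have key : p ^ y = d * (d + 2 ^ (x + 1)) := by
    rw [h4] at h
    rw [pow_succ]
    zify at h ⊢
    linear_combination h
  have hd1 : 1 ≤ d := by
    rcases Nat.eq_zero_or_pos d with rfl | h'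
    · simp at key; omega
    · exact h'
  obtain ⟨a, _, hda⟩ := (Nat.dvd_prime_pow hp).mp (⟨_, key⟩ : d ∣ p ^ y)
  obtain ⟨b, _, hdb⟩ :=
    (Nat.dvd_prime_pow hp).mp (⟨d, by rw [key, mul_comm]⟩ : (d + 2 ^ (x + 1)) ∣ p ^ y)
  have hx2 : (2:ℕ) ≤ 2 ^ (x + 1) := by
    calc (2:ℕ) = 2 ^ 1 := by norm_num
    _ ≤ 2 ^ (x + 1) := Nat.pow_le_pow_right (by norm_num) (by omega)
  have ha0 : a = 0 := by
    by_contra ha0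
    have hpd : p ∣ d := hda ▸ dvd_pow_self p ha0
    have hb0 : b ≠ 0 := by
      intro hb0; rw [hb0, pow_zero] at hdb; omega
    have hpb : p ∣ d + 2 ^ (x + 1) := hdb ▸ dvd_pow_self p hb0
    have hp2x : p ∣ 2 ^ (x + 1) := by
      have := Nat.dvd_sub hpb hpd
      simpa using this
    have := hp.dvd_of_dvd_pow hp2x
    have := Nat.le_of_dvd (by norm_num) this
    omega
  rw [ha0, pow_zero] at hda
  subst hda
  have key2 : p ^ y = 2 ^ (x + 1) + 1 := by rw [key]; ring
  set m := x + 1 with hm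
  have h2m8 : 8 ≤ 2 ^ m := by
    have := key2; omega
  have hm3 : 3 ≤ m := by
    by_contra hc
    have : 2 ^ m ≤ 2 ^ 2 := Nat.pow_le_pow_right (by norm_num) (by omega)
    omega
  rcases Nat.even_or_odd y with hev | hody
  · -- even case
    obtain ⟨k, hk⟩ := hev
    have hk1 : 1 ≤ k := by omega
    have hq3 : 3 ≤ p ^ k := le_trans hp3 (Nat.le_self_pow (by omega) p)
    have hq2 : p ^ k * p ^ k = 2 ^ m + 1 := by rw [← pow_add, ← hk, key2]
    obtain ⟨e, he⟩ : ∃ e, p ^ k = e + 1 := ⟨p ^ k - 1, by omega⟩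
    have he2 : 2 ≤ e := by omega
    have keq : e * (e + 2) = 2 ^ m := by
      rw [he] at hq2
      zify at hq2 ⊢
      linear_combination hq2
    obtain ⟨s, _, hes⟩ :=
      (Nat.dvd_prime_pow Nat.prime_two).mp (⟨_, keq.symm⟩ : e ∣ 2 ^ m)
    obtain ⟨t, _, het⟩ :=
      (Nat.dvd_prime_pow Nat.prime_two).mp
        (⟨e, by rw [← keq, mul_comm]⟩ : (e + 2) ∣ 2 ^ m)
    have hs1 : s = 1 := by
      by_contra hs
      have hs0 : s ≠ 0 := by
        intro h0; rw [h0, pow_zero] at hes; omega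
      have hs2 : 2 ≤ s := by omega
      have ht2 : 2 ≤ t := by
        by_contra htc
        have : 2 ^ t ≤ 2 ^ 1 := Nat.pow_le_pow_right (by norm_num) (by omega)
        omega
      have h4e : 4 ∣ e := by
        rw [hes]
        calc (4:ℕ) = 2 ^ 2 := by norm_num
        _ ∣ 2 ^ s := pow_dvd_pow 2 hs2
      have h4e2 : 4 ∣ e + 2 := by
        rw [het]
        calc (4:ℕ) = 2 ^ 2 := by norm_num
        _ ∣ 2 ^ t := pow_dvd_pow 2 ht2
      omega
    have he2' : e = 2 := by rw [hs1, pow_one] at hes; exact hes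
    have hpk3 : p ^ k = 3 := by omega
    have hpeq : p = 3 := by
      have hpd3 : p ∣ 3 := hpk3 ▸ dvd_pow_self p (by omega)
      exact (Nat.prime_dvd_prime_iff_eq hp Nat.prime_three).mp hpd3
    have hk1' : k = 1 := by
      have : p ^ k = p ^ 1 := by rw [hpk3, hpeq, pow_one]
      exact Nat.pow_right_injective hp.two_le this
    have hy2 : y = 2 := by omega
    have h2m : 2 ^ m = 2 ^ 3 := by
      have : p ^ y = 9 := by rw [hpeq, hy2]; norm_num
      omega
    have hm' : m = 3 := Nat.pow_right_injective (le_refl 2) h2m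
    have hx' : x = 2 := by omega
    refine ⟨hpeq, hx', hy2, by rw [hx']; norm_num⟩
  · -- odd case: contradiction
    exfalso
    set S := ∑ i ∈ Finset.range y, p ^ i with hS
    have hSodd : Odd S := by
      rw [Nat.odd_iff, hS, Finset.sum_nat_mod,
        Finset.sum_congr rfl (fun i _ => Nat.odd_iff.mp (hodd.pow))]
      simp [Nat.odd_iff.mp hody]
    have hSdvd : S ∣ 2 ^ m := by
      have hZ : (S : ℤ) * ((p : ℤ) - 1) = (2:ℤ) ^ m := by
        have hg := geom_sum_mul (p : ℤ) y
        rw [hS]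
        push_cast
        rw [hg]
        have : ((p : ℤ)) ^ y = 2 ^ m + 1 := by exact_mod_cast key2
        linarith
      have : (S : ℤ) ∣ ((2 ^ m : ℕ) : ℤ) := by
        push_cast
        exact ⟨(p : ℤ) - 1, hZ.symm⟩
      exact_mod_cast this
    have hcop : S.Coprime (2 ^ m) := by
      apply Nat.Coprime.pow_right
      rw [Nat.coprime_comm]
      refine (Nat.Prime.coprime_iff_not_dvd Nat.prime_two).mpr ?_
      have := Nat.odd_iff.mp hSodd
      omega
    have hS1 : S = 1 := hcop.eq_one_of_dvd hSdvd
    have hSge : 1 + p ≤ S := by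
      have h01 : ({0, 1} : Finset ℕ) ⊆ Finset.range y := by
        intro i hi
        simp only [Finset.mem_insert, Finset.mem_singleton] at hi
        simp only [Finset.mem_range]
        omega
      calc 1 + p = ∑ i ∈ ({0, 1} : Finset ℕ), p ^ i := by simp
      _ ≤ S := Finset.sum_le_sum_of_subset h01
    omega
end
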